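/- Let T, μ ∈ ℝ and σ > 0, and let X be a real random variable distributed as the Gaussian N(μ, σ²). Then the expected improvement E[max(T − X, 0)] equals Δ·Φ(Δ/σ) + σ·φ(Δ/σ), where Δ = T − μ. -/

import Mathlib

open MeasureTheory ProbabilityTheory Real

/-- The standard normal density `φ(t) = (2π)^{-1/2} exp(−t²/2)`. -/
noncomputable def stdGaussianPDF (t : ℝ) : ℝ :=
  (Real.sqrt (2 * Real.pi))⁻¹ * Real.exp (-t ^ 2 / 2)

/-- The standard normal CDF `Φ(t) = ∫_{−∞}^{t} φ(s) ds`. -/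
noncomputable def stdGaussianCDF (t : ℝ) : ℝ :=
  ∫ s in Set.Iic t, stdGaussianPDF s

open Filter Set Topology

/-! Writing `X = μ + σ Z` with `Z` standard normal, `max (T - X) 0 = σ (Δ/σ - Z)⁺`, so the
expectation is `∫_{t ≤ Δ/σ} (Δ - σ t) φ(t) dt`. The constant term gives `Δ Φ(Δ/σ)`, and the
linear term is explicit because `t φ(t) = -φ'(t)`. -/

lemma stdGaussianPDF_eq_gaussianPDFReal : stdGaussianPDF = gaussianPDFReal 0 1 := by
  ext t
  simp [stdGaussianPDF, gaussianPDFReal]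

lemma integrable_stdGaussianPDF : Integrable stdGaussianPDF := by
  rw [stdGaussianPDF_eq_gaussianPDFReal]
  exact integrable_gaussianPDFReal 0 1

lemma integrable_mul_stdGaussianPDF : Integrable fun t ↦ t * stdGaussianPDF t := by
  have h : Integrable fun t : ℝ ↦ t * exp (-(1 / 2 : ℝ) * t ^ 2) :=
    integrable_mul_exp_neg_mul_sq (by norm_num)
  refine (h.const_mul (√(2 * π))⁻¹).congr (ae_of_all _ fun t ↦ ?_)
  simp only [stdGaussianPDF]
  ring_nf

lemma hasDerivAt_stdGaussianPDF (t : ℝ) :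
    HasDerivAt stdGaussianPDF (-t * stdGaussianPDF t) t := by
  have h : HasDerivAt (fun s : ℝ ↦ -s ^ 2 / 2) (-t) t := by
    simpa using ((hasDerivAt_pow 2 t).neg.div_const 2).congr_deriv (by ring)
  refine (h.exp.const_mul (√(2 * π))⁻¹).congr_deriv ?_
  simp only [stdGaussianPDF]
  ring

lemma tendsto_stdGaussianPDF_atBot : Tendsto stdGaussianPDF atBot (𝓝 0) := by
  have hsq : Tendsto (fun t : ℝ ↦ -t ^ 2 / 2) atBot atBot := by
    refine Tendsto.atBot_div_const (by norm_num) (tendsto_neg_atTop_atBot.comp ?_)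
    have := (tendsto_pow_atTop (α := ℝ) two_ne_zero).comp tendsto_neg_atBot_atTop
    simpa [Function.comp_def] using this
  unfold stdGaussianPDF
  simpa using (tendsto_exp_atBot.comp hsq).const_mul (√(2 * π))⁻¹

lemma integral_Iic_mul_stdGaussianPDF (z : ℝ) :
    ∫ t in Iic z, t * stdGaussianPDF t = -stdGaussianPDF z := by
  simpa using integral_Iic_of_hasDerivAt_of_tendsto' (a := z) (f' := fun t ↦ t * stdGaussianPDF t)
    (fun t _ ↦ (hasDerivAt_stdGaussianPDF t).neg.congr_deriv (by ring))
    integrable_mul_stdGaussianPDF.integrableOn tendsto_stdGaussianPDF_atBot.neg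

lemma integral_gaussianReal_zero_one {E : Type*} [NormedAddCommGroup E] [NormedSpace ℝ E]
    (f : ℝ → E) : ∫ x, f x ∂gaussianReal 0 1 = ∫ x, stdGaussianPDF x • f x := by
  rw [integral_gaussianReal_eq_integral_smul one_ne_zero, stdGaussianPDF_eq_gaussianPDFReal]

lemma gaussianReal_eq_map_affine (μ σ : ℝ) :
    gaussianReal μ (σ ^ 2).toNNReal = (gaussianReal 0 1).map fun t ↦ σ * t + μ := by
  change _ = (gaussianReal 0 1).map ((· + μ) ∘ (σ * ·))
  rw [← Measure.map_map (by fun_prop) (by fun_prop), gaussianReal_map_const_mul,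
    gaussianReal_map_add_const]
  congr 1
  · ring
  · ext
    simp [sq_nonneg]

lemma integral_gaussianReal_eq_integral_stdGaussianPDF {E : Type*} [NormedAddCommGroup E]
    [NormedSpace ℝ E] {μ σ : ℝ} {f : ℝ → E}
    (hf : AEStronglyMeasurable f (gaussianReal μ (σ ^ 2).toNNReal)) :
    ∫ x, f x ∂gaussianReal μ (σ ^ 2).toNNReal = ∫ t, stdGaussianPDF t • f (σ * t + μ) := by
  rw [gaussianReal_eq_map_affine] at hf ⊢
  rw [integral_map (by fun_prop) hf, integral_gaussianReal_zero_one]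

lemma max_sub_mul_zero_eq_indicator {σ : ℝ} (hσ : 0 < σ) (Δ t : ℝ) :
    max (Δ - σ * t) 0 = (Iic (Δ / σ)).indicator (fun t ↦ Δ - σ * t) t := by
  by_cases ht : t ≤ Δ / σ
  · rw [indicator_of_mem (mem_Iic.mpr ht), max_eq_left]
    rw [le_div_iff₀ hσ] at ht
    linarith
  · rw [indicator_of_notMem (mt mem_Iic.mp ht), max_eq_right]
    rw [not_le, div_lt_iff₀ hσ] at ht
    linarith

lemma integral_max_sub_mul_zero_mul_stdGaussianPDF {σ : ℝ} (hσ : 0 < σ) (Δ : ℝ) :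
    ∫ t, max (Δ - σ * t) 0 * stdGaussianPDF t =
      Δ * stdGaussianCDF (Δ / σ) + σ * stdGaussianPDF (Δ / σ) := by
  simp_rw [max_sub_mul_zero_eq_indicator hσ, ← indicator_mul_left]
  rw [integral_indicator measurableSet_Iic]
  simp_rw [sub_mul, mul_assoc]
  rw [integral_sub (integrable_stdGaussianPDF.const_mul Δ).integrableOn
      (integrable_mul_stdGaussianPDF.const_mul σ).integrableOn,
    integral_const_mul, integral_const_mul, integral_Iic_mul_stdGaussianPDF, stdGaussianCDF]
  ring

theorem expected_improvement_closed_form_general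
    {Ω : Type*} [MeasureSpace Ω]
    (X : Ω → ℝ) (T μ σ : ℝ) (hσ : 0 < σ)
    (hX : Measure.map X ℙ = gaussianReal μ (Real.toNNReal (σ ^ 2))) :
    ∫ ω, max (T - X ω) 0 ∂ℙ =
      (T - μ) * stdGaussianCDF ((T - μ) / σ) + σ * stdGaussianPDF ((T - μ) / σ) := by
  have hlaw : HasLaw X (gaussianReal μ (σ ^ 2).toNNReal) :=
    ⟨aemeasurable_of_map_neZero (by rw [hX]; infer_instance), hX⟩
  calc ∫ ω, max (T - X ω) 0 ∂ℙ
      = ∫ x, max (T - x) 0 ∂gaussianReal μ (σ ^ 2).toNNReal :=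
        hlaw.integral_comp (f := fun x ↦ max (T - x) 0) (by fun_prop)
    _ = ∫ t, max (T - μ - σ * t) 0 * stdGaussianPDF t := by
        rw [integral_gaussianReal_eq_integral_stdGaussianPDF (by fun_prop)]
        congr 1 with t
        rw [smul_eq_mul, mul_comm]
        congr 2
        ring
    _ = _ := integral_max_sub_mul_zero_mul_stdGaussianPDF hσ _

/-- Closed form of the expected improvement: if `X ~ N(μ, σ²)` then
`E[max (T − X) 0] = Δ Φ(Δ/σ) + σ φ(Δ/σ)` where `Δ = T − μ`. -/
theorem expected_improvement_closed_form
    {Ω : Type*} [MeasureSpace Ω] [IsProbabilityMeasure (ℙ : Measure Ω)]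
    (X : Ω → ℝ) (T μ σ : ℝ) (hσ : 0 < σ)
    (hX : Measure.map X ℙ = gaussianReal μ (Real.toNNReal (σ ^ 2))) :
    ∫ ω, max (T - X ω) 0 ∂ℙ =
      (T - μ) * stdGaussianCDF ((T - μ) / σ) + σ * stdGaussianPDF ((T - μ) / σ) :=
  expected_improvement_closed_form_general X T μ σ hσ hX
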